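/- arXiv:2307.01959 — 2 statements merged into one kernel-verified Lean document; each statement's English description precedes it below -/
import Mathlib

section
/- Let J be a proper two-sided ideal of B(H) and A a closed range operator. If there exists a partial isometry V and an invertible G with G − I ∈ J such that GA = V, then AA* − P_{R(A)} ∈ J. -/
open ContinuousLinearMap
open scoped ENNReal

noncomputable section

variable {H : Type*} [NormedAddCommGroup H] [InnerProductSpace ℂ H] [CompleteSpace H]

/-- Reduced minimum modulus `γ(A) = inf {‖A f‖ : f ∈ N(A)ᗮ, ‖f‖ = 1}`. -/
def gamma (A : H →L[ℂ] H) : ℝ :=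
  sInf {c : ℝ | ∃ f ∈ (LinearMap.ker (A : H →ₗ[ℂ] H))ᗮ, ‖f‖ = 1 ∧ c = ‖A f‖}

/-- `B` is the Moore–Penrose inverse of `A`. -/
def IsMoorePenrose (A B : H →L[ℂ] H) : Prop :=
  A ∘L B ∘L A = A ∧ B ∘L A ∘L B = B ∧ IsSelfAdjoint (A ∘L B) ∧ IsSelfAdjoint (B ∘L A)

/-- `P` is an orthogonal projection. -/
def IsOrthoProj (P : H →L[ℂ] H) : Prop := P ∘L P = P ∧ IsSelfAdjoint P

/-- `P` is the orthogonal projection onto the subspace `S`. -/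
def IsOrthoProjOnto (P : H →L[ℂ] H) (S : Submodule ℂ H) : Prop :=
  IsOrthoProj P ∧ LinearMap.range (P : H →ₗ[ℂ] H) = S

/-- `V` is a partial isometry. -/
def IsPartialIsom (V : H →L[ℂ] H) : Prop := V ∘L adjoint V ∘L V = V

/-- `A = V C` is the polar decomposition of `A`: `C = |A|` and `V = V_A` is the
partial isometry with `N(V) = N(A)`. -/
def IsPolarDecomp (A V C : H →L[ℂ] H) : Prop :=
  A = V ∘L C ∧ C.IsPositive ∧ C ∘L C = adjoint A ∘L A ∧ IsPartialIsom V ∧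
    LinearMap.ker (V : H →ₗ[ℂ] H) = LinearMap.ker (A : H →ₗ[ℂ] H)

/-- `J` is a two-sided ideal of `B(H)`. -/
structure IsTwoSidedIdeal (J : Set (H →L[ℂ] H)) : Prop where
  zero_mem : (0 : H →L[ℂ] H) ∈ J
  add_mem : ∀ {A B : H →L[ℂ] H}, A ∈ J → B ∈ J → A + B ∈ J
  neg_mem : ∀ {A : H →L[ℂ] H}, A ∈ J → -A ∈ J
  mul_left : ∀ (B : H →L[ℂ] H) {A : H →L[ℂ] H}, A ∈ J → B ∘L A ∈ J
  mul_right : ∀ (B : H →L[ℂ] H) {A : H →L[ℂ] H}, A ∈ J → A ∘L B ∈ J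

/-- `J` is a proper two-sided ideal of `B(H)`. -/
def IsProperIdeal (J : Set (H →L[ℂ] H)) : Prop :=
  IsTwoSidedIdeal J ∧ J ≠ {0} ∧ J ≠ Set.univ

/-- The `n`-th approximation number of `A`; for a compact operator this is the
`(n+1)`-th singular value `s_{n+1}(A)`. -/
def approxNum (A : H →L[ℂ] H) (n : ℕ) : ℝ :=
  sInf {c : ℝ | ∃ F : H →L[ℂ] H, FiniteDimensional ℂ ↥(LinearMap.range (F : H →ₗ[ℂ] H)) ∧
    Module.finrank ℂ ↥(LinearMap.range (F : H →ₗ[ℂ] H)) ≤ n ∧ c = ‖A - F‖}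

/-- Submajorization `s(B) ≺_w s(A)` of the singular value sequences. -/
def Submaj (B A : H →L[ℂ] H) : Prop :=
  ∀ n : ℕ, ∑ i ∈ Finset.range n, approxNum B i ≤ ∑ i ∈ Finset.range n, approxNum A i

/-- `J` is arithmetic mean closed. -/
def IsArithMeanClosed (J : Set (H →L[ℂ] H)) : Prop :=
  ∀ A B : H →L[ℂ] H, A ∈ J → IsCompactOperator (⇑B) → Submaj B A → B ∈ J

/-- Symmetric norming function on the space of finitely supported real sequences. -/
structure IsSymmNormingFun (Φ : (ℕ →₀ ℝ) → ℝ) : Prop where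
  triangle : ∀ x y, Φ (x + y) ≤ Φ x + Φ y
  homog : ∀ (c : ℝ) (x), Φ (c • x) = |c| * Φ x
  definite : ∀ x, Φ x = 0 → x = 0
  normalized : Φ (Finsupp.single 0 1) = 1
  symm : ∀ (σ : Equiv.Perm ℕ) (x), Φ (Finsupp.equivMapDomain σ x) = Φ x
  abs_invariant : ∀ x, Φ (Finsupp.mapRange (fun t => |t|) abs_zero x) = Φ x

/-- The (possibly infinite) norm `‖A‖_Φ = sup_k Φ(s_1(A),…,s_k(A),0,…)`. -/
def phiNorm (Φ : (ℕ →₀ ℝ) → ℝ) (A : H →L[ℂ] H) : ℝ≥0∞ :=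
  ⨆ k : ℕ, ENNReal.ofReal (Φ (∑ i ∈ Finset.range k, Finsupp.single i (approxNum A i)))

/-- `(P, Q)` is a Fredholm pair of projections: `Q P|_{R(P)} : R(P) → R(Q)` has
finite-dimensional kernel `R(P) ∩ N(Q)`, finite-dimensional cokernel
(measured by `R(Q) ∩ N(P)`) and closed range. -/
def IsFredholmPair (P Q : H →L[ℂ] H) : Prop :=
  FiniteDimensional ℂ ↥(LinearMap.range (P : H →ₗ[ℂ] H) ⊓ LinearMap.ker (Q : H →ₗ[ℂ] H)) ∧
  FiniteDimensional ℂ ↥(LinearMap.range (Q : H →ₗ[ℂ] H) ⊓ LinearMap.ker (P : H →ₗ[ℂ] H)) ∧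
  IsClosed (Q '' (LinearMap.range (P : H →ₗ[ℂ] H) : Set H))

/-- Essential codimension `[P : Q] = dim(N(Q) ∩ R(P)) − dim(R(Q) ∩ N(P))`. -/
def essCodim (P Q : H →L[ℂ] H) : ℤ :=
  (Module.finrank ℂ ↥(LinearMap.range (P : H →ₗ[ℂ] H) ⊓ LinearMap.ker (Q : H →ₗ[ℂ] H)) : ℤ) -
    (Module.finrank ℂ ↥(LinearMap.range (Q : H →ₗ[ℂ] H) ⊓ LinearMap.ker (P : H →ₗ[ℂ] H)) : ℤ)

/-- `{f n}` is a frame for the closed subspace `S`. -/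
def IsFrameFor (f : ℕ → H) (S : Submodule ℂ H) : Prop :=
  IsClosed (S : Set H) ∧ (∀ n, f n ∈ S) ∧
  ∃ α β : ℝ, 0 < α ∧ α ≤ β ∧ ∀ v ∈ S,
    α * ‖v‖ ^ 2 ≤ ∑' n, ‖(inner ℂ v (f n) : ℂ)‖ ^ 2 ∧
    ∑' n, ‖(inner ℂ v (f n) : ℂ)‖ ^ 2 ≤ β * ‖v‖ ^ 2

/-- The nonzero point spectrum of `CA`, as an index type. -/
def specIdx (CA : H →L[ℂ] H) : Type _ :=
  {lam : ℝ // lam ≠ 0 ∧ LinearMap.ker ((CA - (lam : ℂ) • (1 : H →L[ℂ] H)) : H →ₗ[ℂ] H) ≠ ⊥}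

/-!
With `W = G⁻¹` and `Q = V V*` we have `A = W V`, hence `A A* = W Q W*`, which is `Q` modulo `J`
because `W - 1 ∈ J` and ideals of `B(H)` are closed under adjoints. The projection `P = P_{R(A)}`
is also `Q` modulo `J`: `G` maps `R(A)` into `R(V) = R(Q)` and `W` maps `R(Q)` into `R(A)`, so
`(1 - Q) P = -(1 - Q)(G - 1) P` and `(1 - P) Q = -(1 - P)(W - 1) Q` lie in `J`, and
`P - Q = ((1 - Q) P)* - (1 - P) Q`.
-/

section Factorization

variable {𝕜 E F G : Type*} [RCLike 𝕜] [NormedAddCommGroup E] [NormedSpace 𝕜 E]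
  [NormedAddCommGroup F] [InnerProductSpace 𝕜 F] [CompleteSpace F]
  [NormedAddCommGroup G] [NormedSpace 𝕜 G] [CompleteSpace G]

/-- The easy half of Douglas' factorization lemma. -/
theorem ContinuousLinearMap.exists_comp_eq_of_norm_apply_le {S : E →L[𝕜] F} {T : E →L[𝕜] G}
    {C : ℝ} (h : ∀ x, ‖T x‖ ≤ C * ‖S x‖) : ∃ U : F →L[𝕜] G, U ∘L S = T := by
  set K := (LinearMap.range (S : E →ₗ[𝕜] F)).topologicalClosure
  let S' : E →ₗ[𝕜] K := (S : E →ₗ[𝕜] F).codRestrict K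
    fun x => Submodule.le_topologicalClosure _ ⟨x, rfl⟩
  have hS' : DenseRange S' := by
    rw [DenseRange, Subtype.dense_iff, ← Set.range_comp]
    change (K : Set F) ⊆ closure (Set.range S)
    rw [Submodule.topologicalClosure_coe]
    rfl
  -- `U` extends `S x ↦ T x` to the closure of the range of `S` and vanishes on its complement
  refine ⟨(T : E →ₗ[𝕜] G).extendOfNorm S' ∘L K.orthogonalProjectionOnto, ?_⟩
  ext x
  change (T : E →ₗ[𝕜] G).extendOfNorm S' (K.orthogonalProjectionOnto (S' x : F)) = T x
  rw [Submodule.orthogonalProjectionOnto_mem_subspace_eq_self,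
    LinearMap.extendOfNorm_eq hS' ⟨C, h⟩, coe_coe]

end Factorization

theorem ContinuousLinearMap.comp_eq_zero_of_range_le {R M N K : Type*} [Semiring R]
    [AddCommMonoid M] [Module R M] [TopologicalSpace M]
    [AddCommMonoid N] [Module R N] [TopologicalSpace N]
    [AddCommMonoid K] [Module R K] [TopologicalSpace K]
    {A P : M →L[R] N} {B : N →L[R] K}
    (hPA : LinearMap.range (P : M →ₗ[R] N) ≤ LinearMap.range (A : M →ₗ[R] N))
    (hBA : B ∘L A = 0) : B ∘L P = 0 := by
  ext x
  obtain ⟨y, hy⟩ := hPA (LinearMap.mem_range_self (P : M →ₗ[R] N) x)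
  rw [comp_apply, ← coe_coe P, ← hy, coe_coe, ← comp_apply, hBA, zero_apply, zero_apply]

theorem ContinuousLinearMap.norm_cfcAbs_apply (T : H →L[ℂ] H) (x : H) :
    ‖CFC.abs T x‖ = ‖T x‖ := by
  have hself : adjoint (CFC.abs T) = CFC.abs T :=
    ((CFC.abs_nonneg T).isSelfAdjoint).adjoint_eq
  have hsq : adjoint (CFC.abs T) ∘L CFC.abs T = adjoint T ∘L T := by
    rw [hself, ← star_eq_adjoint]
    exact CFC.abs_mul_abs T
  rw [← sq_eq_sq₀ (norm_nonneg _) (norm_nonneg _), apply_norm_sq_eq_inner_adjoint_left, hsq,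
    apply_norm_sq_eq_inner_adjoint_left]

/-- Since `‖|T| x‖ = ‖T x‖`, Douglas' lemma gives `T = U |T|` and `|T| = W T`; so `|T|`, and then
`T* = |T| U*`, lie in `I`. -/
theorem TwoSidedIdeal.star_mem_of_mem {I : TwoSidedIdeal (H →L[ℂ] H)} {T : H →L[ℂ] H}
    (hT : T ∈ I) : star T ∈ I := by
  obtain ⟨U, hU⟩ := exists_comp_eq_of_norm_apply_le (S := CFC.abs T) (T := T) (C := 1)
    fun x => by rw [norm_cfcAbs_apply, one_mul]
  obtain ⟨W, hW⟩ := exists_comp_eq_of_norm_apply_le (S := T) (T := CFC.abs T) (C := 1)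
    fun x => by rw [norm_cfcAbs_apply, one_mul]
  have habs : CFC.abs T ∈ I := hW ▸ I.mul_mem_left W T hT
  have hstar : star T = CFC.abs T * star U := by
    conv_lhs => rw [← hU]
    rw [← mul_def, star_mul, (CFC.abs_nonneg T).isSelfAdjoint.star_eq]
  exact hstar ▸ I.mul_mem_right _ _ habs

namespace TwoSidedIdeal

variable {R : Type*} [Ring R] (I : TwoSidedIdeal R)

theorem inv_sub_one_mem {u : Rˣ} (hu : (u : R) - 1 ∈ I) : ((u⁻¹ : Rˣ) : R) - 1 ∈ I := by
  have key : ((u⁻¹ : Rˣ) : R) - 1 = -(↑u⁻¹ * (↑u - 1)) := by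
    rw [mul_sub, Units.inv_mul, mul_one, neg_sub]
  exact key ▸ I.neg_mem (I.mul_mem_left _ _ hu)

variable [StarRing R]

theorem mul_mul_star_sub_mem (hI : ∀ x ∈ I, star x ∈ I) {w : R} (hw : w - 1 ∈ I) (x : R) :
    w * x * star w - x ∈ I := by
  have hstar : star (w - 1) = star w - 1 := by rw [star_sub, star_one]
  have key : w * x * star w - x = (w - 1) * (x * star w) + x * star (w - 1) := by
    rw [hstar]
    noncomm_ring
  exact key ▸ I.add_mem (I.mul_mem_right _ _ hw) (I.mul_mem_left _ _ (hI _ hw))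

theorem sub_mem_of_one_sub_mul_mul_eq_zero (hI : ∀ x ∈ I, star x ∈ I) {p q g w : R}
    (hp : IsSelfAdjoint p) (hq : IsSelfAdjoint q) (hg : g - 1 ∈ I) (hw : w - 1 ∈ I)
    (hqgp : (1 - q) * g * p = 0) (hpwq : (1 - p) * w * q = 0) : p - q ∈ I := by
  have hqp : (1 - q) * p ∈ I := by
    have : (1 - q) * p = -((1 - q) * (g - 1) * p) := by
      rw [← sub_eq_zero, sub_neg_eq_add, ← hqgp]
      noncomm_ring
    exact this ▸ I.neg_mem (I.mul_mem_right _ _ (I.mul_mem_left _ _ hg))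
  have hpq : (1 - p) * q ∈ I := by
    have : (1 - p) * q = -((1 - p) * (w - 1) * q) := by
      rw [← sub_eq_zero, sub_neg_eq_add, ← hpwq]
      noncomm_ring
    exact this ▸ I.neg_mem (I.mul_mem_right _ _ (I.mul_mem_left _ _ hw))
  have hstar : star ((1 - q) * p) = p * (1 - q) := by
    rw [star_mul, star_sub, star_one, hp.star_eq, hq.star_eq]
  have key : p - q = star ((1 - q) * p) - (1 - p) * q := by
    rw [hstar]
    noncomm_ring
  exact key ▸ I.sub_mem (hI _ hqp) hpq

end TwoSidedIdeal

section IdealOfSet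

variable {E : Type*} [NormedAddCommGroup E] [InnerProductSpace ℂ E]

def IsTwoSidedIdeal.toTwoSidedIdeal {J : Set (E →L[ℂ] E)} (hJ : IsTwoSidedIdeal J) :
    TwoSidedIdeal (E →L[ℂ] E) :=
  .mk' J hJ.zero_mem hJ.add_mem hJ.neg_mem (hJ.mul_left _) (hJ.mul_right _)

@[simp]
theorem IsTwoSidedIdeal.mem_toTwoSidedIdeal {J : Set (E →L[ℂ] E)} (hJ : IsTwoSidedIdeal J)
    {T : E →L[ℂ] E} : T ∈ hJ.toTwoSidedIdeal ↔ T ∈ J :=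
  TwoSidedIdeal.mem_mk' _ _ _ _ _ _ _

end IdealOfSet

theorem stmt_13_general (J : Set (H →L[ℂ] H)) (hJ : IsProperIdeal J)
    (A V PRA : H →L[ℂ] H)
    (hV : IsPartialIsom V)
    (G : (H →L[ℂ] H)ˣ) (hG : (G : H →L[ℂ] H) - 1 ∈ J)
    (hGA : (G : H →L[ℂ] H) ∘L A = V)
    (hPRA : IsOrthoProjOnto PRA (LinearMap.range (A : H →ₗ[ℂ] H))) :
    A ∘L adjoint A - PRA ∈ J := by
  obtain ⟨⟨hPP, hPsa⟩, hPrange⟩ := hPRA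
  set I := hJ.1.toTwoSidedIdeal
  have hI : ∀ T ∈ I, star T ∈ I := fun _ => I.star_mem_of_mem
  replace hG : (G : H →L[ℂ] H) - 1 ∈ I := hJ.1.mem_toTwoSidedIdeal.2 hG
  set W : H →L[ℂ] H := ↑G⁻¹
  have hW : W - 1 ∈ I := I.inv_sub_one_mem hG
  replace hGA : (G : H →L[ℂ] H) * A = V := hGA
  have hA : A = W * V := by rw [← hGA, Units.inv_mul_cancel_left]
  set Q := V * star V
  have hQV : Q * V = V := by rw [mul_assoc]; exact hV
  have hPA : (1 - PRA) * A = 0 :=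
    comp_eq_zero_of_range_le hPrange.ge <| by
      rw [← mul_def, sub_mul, one_mul, mul_def, hPP, sub_self]
  have hQGP : (1 - Q) * G * PRA = 0 := by
    refine comp_eq_zero_of_range_le hPrange.le ?_
    rw [← mul_def, mul_assoc, hGA, sub_mul, one_mul, hQV, sub_self]
  have hPWQ : (1 - PRA) * W * Q = 0 := by
    rw [mul_assoc, ← mul_assoc W, ← hA, ← mul_assoc, hPA, zero_mul]
  rw [← hJ.1.mem_toTwoSidedIdeal, ← star_eq_adjoint, ← mul_def]
  have key : A * star A - PRA = (W * Q * star W - Q) - (PRA - Q) := by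
    rw [hA, star_mul]
    simp only [Q]
    noncomm_ring
  exact key ▸ I.sub_mem (I.mul_mul_star_sub_mem hI hW Q)
    (I.sub_mem_of_one_sub_mul_mul_eq_zero hI hPsa (.mul_star_self V) hG hW hQGP hPWQ)

/-- Let `J` be a proper two-sided ideal and `A` a closed range
operator. If `GA = V` for some partial isometry `V` and invertible `G` with
`G − I ∈ J`, then `AA* − P_{R(A)} ∈ J`. -/
theorem stmt_13 (J : Set (H →L[ℂ] H)) (hJ : IsProperIdeal J)
    (A V PRA : H →L[ℂ] H)
    (hAcl : IsClosed (LinearMap.range (A : H →ₗ[ℂ] H) : Set H))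
    (hV : IsPartialIsom V)
    (G : (H →L[ℂ] H)ˣ) (hG : (G : H →L[ℂ] H) - 1 ∈ J)
    (hGA : (G : H →L[ℂ] H) ∘L A = V)
    (hPRA : IsOrthoProjOnto PRA (LinearMap.range (A : H →ₗ[ℂ] H))) :
    A ∘L adjoint A - PRA ∈ J :=
  stmt_13_general J hJ A V PRA hV G hG hGA hPRA
end
end

section
/- Let A be a closed range operator with polar decomposition A = V_A|A|, and let B be a closed range operator with N(A) = N(B), A − B compact, such that AB*|_{R(A)} = I_{R(A)} and BA*|_{R(B)} = I_{R(B)}. Then for every symmetric norming function Φ, ‖A − (A*)^†‖_Φ ≤ ‖A − B‖_Φ. -/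
open ContinuousLinearMap
open scoped ENNReal

noncomputable section

variable {H : Type*} [NormedAddCommGroup H] [InnerProductSpace ℂ H] [CompleteSpace H]

/-! If `X = (A*)†`, then `X A*` and `A* X` are orthogonal projections, and the condition
`AB*|_{R(A)} = I` says `A* B A* = A*`. Together with the Penrose equations this gives
`A − X = (X A*)(A − B)(A* X)`. Compressing by contractions cannot increase approximation numbers,
and a symmetric norming function is increasing in the absolute values of its arguments, so `‖A − X‖_Φ ≤ ‖A − B‖_Φ`. -/

namespace IsSymmNormingFun

variable {Φ : (ℕ →₀ ℝ) → ℝ}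

theorem convexOn (hΦ : IsSymmNormingFun Φ) : ConvexOn ℝ Set.univ Φ :=
  (Seminorm.of Φ hΦ.triangle fun c x => by rw [hΦ.homog, Real.norm_eq_abs]).convexOn

theorem apply_add_single_abs (hΦ : IsSymmNormingFun Φ) {x : ℕ →₀ ℝ} {i : ℕ} (hx : x i = 0)
    (t : ℝ) : Φ (x + Finsupp.single i |t|) = Φ (x + Finsupp.single i t) := by
  rw [← hΦ.abs_invariant, ← hΦ.abs_invariant (x + _)]
  congr 1
  ext j
  rcases eq_or_ne i j with rfl | hij
  · simp [hx]
  · simp [Finsupp.single_eq_of_ne hij.symm]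

/-- The section `t ↦ Φ (x + t eᵢ)` is convex and even, hence increasing in `|t|`. -/
theorem apply_add_single_mono (hΦ : IsSymmNormingFun Φ) {x : ℕ →₀ ℝ} {i : ℕ} (hx : x i = 0)
    {a b : ℝ} (hab : |a| ≤ |b|) :
    Φ (x + Finsupp.single i a) ≤ Φ (x + Finsupp.single i b) := by
  have hconv : ConvexOn ℝ Set.univ fun t => Φ (x + Finsupp.single i t) :=
    (hΦ.convexOn.translate_right x).comp_linearMap (Finsupp.lsingle i)
  have hneg : Φ (x + Finsupp.single i (-|b|)) = Φ (x + Finsupp.single i b) := by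
    rw [← hΦ.apply_add_single_abs hx, abs_neg, abs_abs, hΦ.apply_add_single_abs hx]
  calc Φ (x + Finsupp.single i a)
      ≤ max (Φ (x + Finsupp.single i (-|b|))) (Φ (x + Finsupp.single i |b|)) :=
        hconv.le_max_of_mem_Icc trivial trivial (abs_le.mp hab)
    _ = Φ (x + Finsupp.single i b) := by rw [hneg, hΦ.apply_add_single_abs hx, max_self]

theorem apply_add_sum_single_mono (hΦ : IsSymmNormingFun Φ) {a b : ℕ → ℝ}
    (hab : ∀ i, |a i| ≤ |b i|) (s : Finset ℕ) {x : ℕ →₀ ℝ} (hx : ∀ i ∈ s, x i = 0) :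
    Φ (x + ∑ i ∈ s, Finsupp.single i (a i)) ≤ Φ (x + ∑ i ∈ s, Finsupp.single i (b i)) := by
  induction s using Finset.induction_on generalizing x with
  | empty => rfl
  | insert j s hj ih =>
    have hsum_j : ∀ c : ℕ → ℝ, (∑ i ∈ s, Finsupp.single i (c i)) j = 0 := fun c => by
      rw [Finsupp.finsetSum_apply]
      exact Finset.sum_eq_zero fun i hi => Finsupp.single_eq_of_ne (by rintro rfl; exact hj hi)
    rw [Finset.sum_insert hj, Finset.sum_insert hj]
    calc Φ (x + (Finsupp.single j (a j) + ∑ i ∈ s, Finsupp.single i (a i)))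
        = Φ (x + ∑ i ∈ s, Finsupp.single i (a i) + Finsupp.single j (a j)) := by
          congr 1; abel
      _ ≤ Φ (x + ∑ i ∈ s, Finsupp.single i (a i) + Finsupp.single j (b j)) :=
          hΦ.apply_add_single_mono
            (by rw [Finsupp.add_apply, hsum_j, hx j (Finset.mem_insert_self j s), add_zero])
            (hab j)
      _ = Φ (x + Finsupp.single j (b j) + ∑ i ∈ s, Finsupp.single i (a i)) := by
          rw [add_right_comm]
      _ ≤ Φ (x + Finsupp.single j (b j) + ∑ i ∈ s, Finsupp.single i (b i)) :=
          ih fun i hi => by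
            rw [Finsupp.add_apply, hx i (Finset.mem_insert_of_mem hi), zero_add,
              Finsupp.single_eq_of_ne (by rintro rfl; exact hj hi)]
      _ = Φ (x + (Finsupp.single j (b j) + ∑ i ∈ s, Finsupp.single i (b i))) := by
          rw [add_assoc]

end IsSymmNormingFun

omit [CompleteSpace H] in
theorem approxNum_nonneg (A : H →L[ℂ] H) (n : ℕ) : 0 ≤ approxNum A n :=
  Real.sInf_nonneg (by rintro c ⟨F, -, -, rfl⟩; exact norm_nonneg _)

omit [CompleteSpace H] in
theorem approxNum_comp_comp_le {P Q : H →L[ℂ] H} (hP : ‖P‖ ≤ 1) (hQ : ‖Q‖ ≤ 1)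
    (C : H →L[ℂ] H) (n : ℕ) : approxNum (P ∘L C ∘L Q) n ≤ approxNum C n := by
  have hzero : LinearMap.range ((0 : H →L[ℂ] H) : H →ₗ[ℂ] H) = ⊥ := by
    rw [toLinearMap_zero, LinearMap.range_zero]
  refine le_csInf ⟨‖C - 0‖, 0, by rw [hzero]; infer_instance,
    by rw [hzero, finrank_bot]; exact n.zero_le, rfl⟩ ?_
  rintro _ ⟨F, hF, hFn, rfl⟩
  have hrange : LinearMap.range ((P ∘L F ∘L Q : H →L[ℂ] H) : H →ₗ[ℂ] H) ≤
      (LinearMap.range (F : H →ₗ[ℂ] H)).map (P : H →ₗ[ℂ] H) := by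
    rintro _ ⟨x, rfl⟩
    exact ⟨F (Q x), LinearMap.mem_range_self _ _, rfl⟩
  have hfin : FiniteDimensional ℂ (LinearMap.range ((P ∘L F ∘L Q : H →L[ℂ] H) : H →ₗ[ℂ] H)) :=
    Submodule.finiteDimensional_of_le hrange
  have hrank := (Submodule.finrank_mono hrange).trans (Submodule.finrank_map_le _ _)
  calc approxNum (P ∘L C ∘L Q) n ≤ ‖P ∘L C ∘L Q - P ∘L F ∘L Q‖ :=
        csInf_le ⟨0, by rintro _ ⟨F', -, -, rfl⟩; exact norm_nonneg _⟩
          ⟨P ∘L F ∘L Q, hfin, hrank.trans hFn, rfl⟩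
    _ = ‖P ∘L (C - F) ∘L Q‖ := by simp only [comp_sub, sub_comp]
    _ ≤ ‖P‖ * (‖C - F‖ * ‖Q‖) := (opNorm_comp_le _ _).trans
        (mul_le_mul_of_nonneg_left (opNorm_comp_le _ _) (norm_nonneg _))
    _ ≤ 1 * (‖C - F‖ * 1) := by gcongr
    _ = ‖C - F‖ := by ring

omit [CompleteSpace H] in
theorem phiNorm_mono {Φ : (ℕ →₀ ℝ) → ℝ} (hΦ : IsSymmNormingFun Φ) {X Y : H →L[ℂ] H}
    (h : ∀ i, approxNum X i ≤ approxNum Y i) : phiNorm Φ X ≤ phiNorm Φ Y :=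
  iSup_mono fun k => ENNReal.ofReal_le_ofReal <| by
    simpa using hΦ.apply_add_sum_single_mono (x := 0)
      (fun i => by rw [abs_of_nonneg (approxNum_nonneg X i),
        abs_of_nonneg ((approxNum_nonneg X i).trans (h i))]; exact h i)
      (Finset.range k) (fun _ _ => rfl)

namespace IsMoorePenrose

variable {M X : H →L[ℂ] H}

theorem isStarProjection_inv_comp (hX : IsMoorePenrose M X) : IsStarProjection (X ∘L M) :=
  ⟨by rw [IsIdempotentElem, mul_def, ← comp_assoc, comp_assoc X, hX.2.1], hX.2.2.2⟩

theorem isStarProjection_comp_inv (hX : IsMoorePenrose M X) : IsStarProjection (M ∘L X) :=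
  ⟨by rw [IsIdempotentElem, mul_def, ← comp_assoc, comp_assoc M, hX.1], hX.2.2.1⟩

/-- `(X M) M* (M X) = M*`, while `(X M) Y (M X) = X` for every inner inverse `Y` of `M`. -/
theorem adjoint_sub_eq (hX : IsMoorePenrose M X) {Y : H →L[ℂ] H} (hY : M ∘L Y ∘L M = M) :
    adjoint M - X = (X ∘L M) ∘L (adjoint M - Y) ∘L (M ∘L X) := by
  obtain ⟨hMXM, hXMX, hMX, hXM⟩ := hX
  have hleft : (X ∘L M) ∘L adjoint M = adjoint M := by
    rw [← hXM.adjoint_eq, ← adjoint_comp, hMXM]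
  have hright : adjoint M ∘L (M ∘L X) = adjoint M := by
    rw [← hMX.adjoint_eq, ← adjoint_comp, comp_assoc, hMXM]
  have hinner : (X ∘L M) ∘L Y ∘L (M ∘L X) = X := by
    calc (X ∘L M) ∘L Y ∘L (M ∘L X) = X ∘L (M ∘L Y ∘L M) ∘L X := by simp only [comp_assoc]
      _ = X := by rw [hY, hXMX]
  rw [sub_comp, comp_sub, hright, hleft, hinner]

end IsMoorePenrose

theorem stmt_14_general (A B Asd : H →L[ℂ] H)
    (hAB : ∀ x ∈ LinearMap.range (A : H →ₗ[ℂ] H), (A ∘L adjoint B) x = x)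
    (hAsd : IsMoorePenrose (adjoint A) Asd) :
    ∀ Φ : (ℕ →₀ ℝ) → ℝ, IsSymmNormingFun Φ →
      phiNorm Φ (A - Asd) ≤ phiNorm Φ (A - B) := by
  intro Φ hΦ
  have hABA : A ∘L adjoint B ∘L A = A := ext fun x => hAB (A x) (LinearMap.mem_range_self _ x)
  have hBinner : adjoint A ∘L B ∘L adjoint A = adjoint A := by
    simpa only [adjoint_comp, adjoint_adjoint, comp_assoc] using congrArg adjoint hABA
  have hdiff : A - Asd = (Asd ∘L adjoint A) ∘L (A - B) ∘L (adjoint A ∘L Asd) := by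
    simpa only [adjoint_adjoint] using hAsd.adjoint_sub_eq hBinner
  rw [hdiff]
  exact phiNorm_mono hΦ (approxNum_comp_comp_le hAsd.isStarProjection_inv_comp.norm_le
    hAsd.isStarProjection_comp_inv.norm_le _)

/-- Let `A` be a closed range operator and `B` a closed range
operator with `N(A) = N(B)`, `A − B` compact, `AB*|_{R(A)} = I_{R(A)}` and
`BA*|_{R(B)} = I_{R(B)}`. Then for every symmetric norming function `Φ`,
`‖A − (A*)†‖_Φ ≤ ‖A − B‖_Φ`. -/
theorem stmt_14 (A B Asd : H →L[ℂ] H)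
    (hAcl : IsClosed (LinearMap.range (A : H →ₗ[ℂ] H) : Set H))
    (hBcl : IsClosed (LinearMap.range (B : H →ₗ[ℂ] H) : Set H))
    (hker : LinearMap.ker (A : H →ₗ[ℂ] H) = LinearMap.ker (B : H →ₗ[ℂ] H))
    (hcpt : IsCompactOperator (⇑(A - B)))
    (hAB : ∀ x ∈ LinearMap.range (A : H →ₗ[ℂ] H), (A ∘L adjoint B) x = x)
    (hBA : ∀ x ∈ LinearMap.range (B : H →ₗ[ℂ] H), (B ∘L adjoint A) x = x)
    (hAsd : IsMoorePenrose (adjoint A) Asd) :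
    ∀ Φ : (ℕ →₀ ℝ) → ℝ, IsSymmNormingFun Φ →
      phiNorm Φ (A - Asd) ≤ phiNorm Φ (A - B) :=
  stmt_14_general A B Asd hAB hAsd

end
end
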